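/- arXiv:2505.21287 — 5 statements merged into one kernel-verified Lean document; each statement's English description precedes it below -/
import Mathlib

section
/- For every integer N ≥ 1 and every n with 0 ≤ n ≤ N, one has φ(n,N+1) - φ(n,N) = (3/(2N+3)) * (1/(N+1-n) - 1/(n+N+2)) * Σ_{n₁=n+1}^{N} 1/(2n₁+1) + (3/((2N+3)(2n+1))) * (1/(N+1-n) - 2/(2N+3)), and this quantity is strictly positive; in particular φ(n,N) is strictly increasing in N for fixed n. -/
/-!
Write `w m = 1 / (2 m + 1)` (`oddRecip`), so that `w (-1 - m) = -w m`. Then `φ(n, N)` is the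
coefficient of `X ^ (n - 1)` in `P_N ^ 3` for the Laurent polynomial
`P_N = ∑_{m = -N-1}^{N} w m X ^ m` (`windowPoly N`), and antisymmetry gives
`P_{N+1} = P_N + w (N + 1) (X ^ (N + 1) - X ^ (-N - 2))`. Expanding the cube, only two
coefficients of `P_N ^ 2` and one cross term contribute. A coefficient of `P_N ^ 2` is a sum of
`w m * w (s - m)` over an interval symmetric under `m ↦ s - m`; partial fractions turn it into
`(∑ w m) / (s + 1)`, and antisymmetry again reduces these sums to the nonnegative tail
`∑_{m = n+1}^{N} w m`.
-/

/-- φ(n,N): the sum over triples (n₁,n₂,n₃) ∈ [-(N+1),N]³ with n₁+n₂+n₃ = n-1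
of ∏ᵢ 1/(2nᵢ+1). -/
noncomputable def phi (n N : ℕ) : ℚ :=
  ∑ p ∈ ((Finset.Icc (-(N : ℤ) - 1) (N : ℤ)) ×ˢ (Finset.Icc (-(N : ℤ) - 1) (N : ℤ)) ×ˢ
      (Finset.Icc (-(N : ℤ) - 1) (N : ℤ))).filter
      (fun p => p.1 + p.2.1 + p.2.2 = (n : ℤ) - 1),
    (1 / (2 * (p.1 : ℚ) + 1)) * (1 / (2 * (p.2.1 : ℚ) + 1)) * (1 / (2 * (p.2.2 : ℚ) + 1))

open AddMonoidAlgebra Finset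

noncomputable def oddRecip (m : ℤ) : ℚ := 1 / (2 * (m : ℚ) + 1)

lemma oddRecip_neg_one_sub (m : ℤ) : oddRecip (-1 - m) = -oddRecip m := by
  rw [oddRecip, oddRecip, show 2 * ((-1 - m : ℤ) : ℚ) + 1 = -(2 * m + 1) by push_cast; ring,
    one_div_neg_eq_neg_one_div]

lemma oddRecip_nonneg {m : ℤ} (hm : 0 ≤ m) : 0 ≤ oddRecip m := by
  have : (0 : ℚ) ≤ m := by exact_mod_cast hm
  rw [oddRecip]
  positivity

lemma oddRecip_mul_oddRecip_sub {s : ℤ} (hs : s ≠ -1) (m : ℤ) :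
    oddRecip m * oddRecip (s - m) = (oddRecip m + oddRecip (s - m)) / (2 * s + 2) := by
  have h₁ : 2 * (m : ℚ) + 1 ≠ 0 := by exact_mod_cast (by omega : 2 * m + 1 ≠ 0)
  have h₂ : 2 * ((s : ℚ) - m) + 1 ≠ 0 := by exact_mod_cast (by omega : 2 * (s - m) + 1 ≠ 0)
  have h₃ : (s : ℚ) + 1 ≠ 0 := by exact_mod_cast (by omega : s + 1 ≠ 0)
  simp only [oddRecip]
  push_cast
  field_simp
  ring

lemma sum_Icc_reflect {M : Type*} [AddCommMonoid M] (f : ℤ → M) (a b : ℤ) :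
    ∑ m ∈ Icc a b, f (a + b - m) = ∑ m ∈ Icc a b, f m :=
  sum_nbij' (fun m ↦ a + b - m) (fun m ↦ a + b - m) (by intro m; simp; omega)
    (by intro m; simp; omega) (by simp) (by simp) (by simp)

lemma sum_oddRecip_Icc_neg_one_sub_self (k : ℤ) : ∑ m ∈ Icc (-1 - k) k, oddRecip m = 0 := by
  have h := sum_Icc_reflect oddRecip (-1 - k) k
  simp only [sub_add_cancel, oddRecip_neg_one_sub, sum_neg_distrib] at h
  linarith

lemma sum_oddRecip_Icc_neg_one_sub {j k : ℤ} (h₁ : -1 - k ≤ j) (h₂ : j ≤ k + 1) :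
    ∑ m ∈ Icc (-1 - k) (j - 1), oddRecip m = -∑ m ∈ Icc j k, oddRecip m := by
  have hunion : Icc (-1 - k) (j - 1) ∪ Icc j k = Icc (-1 - k) k := by
    ext m; simp only [mem_union, mem_Icc]; omega
  have hdisj : Disjoint (Icc (-1 - k) (j - 1)) (Icc j k) := by
    rw [disjoint_left]; intro m; simp only [mem_Icc]; omega
  have h := sum_union (f := oddRecip) hdisj
  rw [hunion, sum_oddRecip_Icc_neg_one_sub_self] at h
  linarith

lemma sum_oddRecip_mul_oddRecip_Icc {a b : ℤ} (hab : a + b ≠ -1) :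
    ∑ m ∈ Icc a b, oddRecip m * oddRecip (a + b - m) =
      (∑ m ∈ Icc a b, oddRecip m) / (a + b + 1) := by
  have h : (2 * ((a + b : ℤ) : ℚ) + 2) ≠ 0 := by exact_mod_cast (by omega : 2 * (a + b) + 2 ≠ 0)
  rw [sum_congr rfl fun m _ ↦ oddRecip_mul_oddRecip_sub hab m, ← sum_div, sum_add_distrib,
    sum_Icc_reflect oddRecip a b]
  push_cast at h ⊢
  field_simp
  ring

noncomputable def window (N : ℕ) : Finset ℤ := Icc (-(N : ℤ) - 1) N

noncomputable def windowPoly (N : ℕ) : ℚ[ℤ] := ∑ m ∈ window N, single m (oddRecip m)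

lemma coeff_windowPoly (N : ℕ) (m : ℤ) :
    (windowPoly N).coeff m = if m ∈ window N then oddRecip m else 0 := by
  simp only [windowPoly, coeff_sum, Finsupp.finsetSum_apply, coeff_single, Finsupp.single_apply,
    sum_ite_eq']

lemma coeff_windowPoly_mul (N : ℕ) (x : ℚ[ℤ]) (s : ℤ) :
    (windowPoly N * x).coeff s = ∑ a ∈ window N, oddRecip a * x.coeff (s - a) := by
  simp only [windowPoly, sum_mul, coeff_sum, Finsupp.finsetSum_apply, coeff_single_mul_apply,
    neg_add_eq_sub]

lemma phi_eq_coeff_windowPoly_pow_three (n N : ℕ) :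
    phi n N = (windowPoly N ^ 3).coeff (n - 1) := by
  simp only [pow_three, coeff_windowPoly_mul, coeff_windowPoly, mul_sum, mul_ite, mul_zero]
  rw [phi, sum_filter, window]
  simp only [sum_product]
  refine sum_congr rfl fun a _ ↦ sum_congr rfl fun b _ ↦ ?_
  rw [← sum_ite_eq _ _ fun c ↦ oddRecip a * (oddRecip b * oddRecip c)]
  refine sum_congr rfl fun c _ ↦ ?_
  simp only [oddRecip]
  split_ifs <;> first | (exfalso; omega) | ring

lemma coeff_windowPoly_sq_add {N : ℕ} {a b : ℤ} (hab : a + b ≠ -1)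
    (hwindow : (window N).filter (fun m ↦ a + b - m ∈ window N) = Icc a b) :
    (windowPoly N ^ 2).coeff (a + b) = (∑ m ∈ Icc a b, oddRecip m) / (a + b + 1) := by
  rw [pow_two, coeff_windowPoly_mul]
  simp only [coeff_windowPoly, mul_ite, mul_zero]
  rw [← sum_filter, hwindow, sum_oddRecip_mul_oddRecip_Icc hab]

lemma window_succ (N : ℕ) :
    window (N + 1) = insert ((N : ℤ) + 1) (insert (-1 - ((N : ℤ) + 1)) (window N)) := by
  ext m
  simp only [window, mem_insert, mem_Icc]
  omega

lemma windowPoly_succ (N : ℕ) :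
    windowPoly (N + 1) = windowPoly N + single ((N : ℤ) + 1) (oddRecip ((N : ℤ) + 1))
      - single (-1 - ((N : ℤ) + 1)) (oddRecip ((N : ℤ) + 1)) := by
  rw [windowPoly, window_succ, sum_insert (by simp [window]; omega),
    sum_insert (by simp [window]; omega), oddRecip_neg_one_sub, single_neg, windowPoly]
  abel

lemma coeff_windowPoly_succ_pow_three_sub {n N : ℕ} (hn : n ≤ N) :
    (windowPoly (N + 1) ^ 3).coeff ((n : ℤ) - 1) - (windowPoly N ^ 3).coeff ((n : ℤ) - 1) =
      3 * oddRecip ((N : ℤ) + 1) * ((windowPoly N ^ 2).coeff ((n : ℤ) - 2 - N)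
        - (windowPoly N ^ 2).coeff ((n : ℤ) + 1 + N))
      - 6 * oddRecip ((N : ℤ) + 1) ^ 2 * oddRecip n := by
  set P := windowPoly N
  set A := single ((N : ℤ) + 1) (oddRecip ((N : ℤ) + 1))
  set B := single (-1 - ((N : ℤ) + 1)) (oddRecip ((N : ℤ) + 1))
  have hcube : (P + A - B) ^ 3 - P ^ 3 = 3 • (P ^ 2 * A) - 3 • (P ^ 2 * B) + 3 • (P * A * A)
      - 6 • (P * A * B) + 3 • (P * B * B) + A * A * A - 3 • (A * A * B) + 3 • (A * B * B)
      - B * B * B := by ring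
  rw [windowPoly_succ, ← Finsupp.sub_apply, ← coeff_sub, hcube]
  simp only [coeff_add, coeff_sub, coeff_smul, Finsupp.add_apply, Finsupp.sub_apply,
    Finsupp.smul_apply, coeff_mul_single_apply, A, B, coeff_single, Finsupp.single_apply, P,
    coeff_windowPoly, window, mem_Icc]
  -- every exponent condition is decided by `n ≤ N`
  simp (disch := omega) only [if_pos, if_neg]
  ring_nf

lemma coeff_windowPoly_sq_sub_two_sub {n N : ℕ} (hn : n ≤ N) :
    (windowPoly N ^ 2).coeff ((n : ℤ) - 2 - N) =
      (oddRecip n + ∑ m ∈ Icc ((n : ℤ) + 1) N, oddRecip m) / (N + 1 - n) := by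
  have h := coeff_windowPoly_sq_add (N := N) (a := -1 - N) (b := n - 1) (by omega) (by
    ext m; simp only [window, mem_filter, mem_Icc]; omega)
  rw [show -1 - (N : ℤ) + (n - 1) = n - 2 - N by ring, sum_oddRecip_Icc_neg_one_sub (by omega)
    (by omega), ← add_sum_Ioc_eq_sum_Icc (by omega), ← Icc_add_one_left_eq_Ioc] at h
  rw [h]
  push_cast
  rw [← neg_div_neg_eq]
  ring_nf

lemma coeff_windowPoly_sq_add_one_add (n N : ℕ) :
    (windowPoly N ^ 2).coeff ((n : ℤ) + 1 + N) =
      (∑ m ∈ Icc ((n : ℤ) + 1) N, oddRecip m) / (n + N + 2) := by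
  have h := coeff_windowPoly_sq_add (N := N) (a := n + 1) (b := N) (by omega) (by
    ext m; simp only [window, mem_filter, mem_Icc]; omega)
  rw [h]
  push_cast
  ring_nf

theorem phi_increasing_general (N n : ℕ) (hn : n ≤ N) :
    phi n (N + 1) - phi n N =
      (3 / (2 * (N : ℚ) + 3)) * (1 / ((N : ℚ) + 1 - n) - 1 / ((n : ℚ) + N + 2)) *
        (∑ n₁ ∈ Finset.Icc ((n : ℤ) + 1) (N : ℤ), 1 / (2 * (n₁ : ℚ) + 1))
      + (3 / ((2 * (N : ℚ) + 3) * (2 * (n : ℚ) + 1))) *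
        (1 / ((N : ℚ) + 1 - n) - 2 / (2 * (N : ℚ) + 3)) ∧
    0 < phi n (N + 1) - phi n N := by
  have hnN : (n : ℚ) ≤ N := by exact_mod_cast hn
  have hS : 0 ≤ ∑ m ∈ Icc ((n : ℤ) + 1) N, oddRecip m :=
    sum_nonneg fun m hm ↦ oddRecip_nonneg (by simp only [mem_Icc] at hm; omega)
  have key : phi n (N + 1) - phi n N =
      (3 / (2 * (N : ℚ) + 3)) * (1 / ((N : ℚ) + 1 - n) - 1 / ((n : ℚ) + N + 2)) *
        (∑ m ∈ Icc ((n : ℤ) + 1) N, oddRecip m)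
      + (3 / ((2 * (N : ℚ) + 3) * (2 * (n : ℚ) + 1))) *
        (1 / ((N : ℚ) + 1 - n) - 2 / (2 * (N : ℚ) + 3)) := by
    rw [phi_eq_coeff_windowPoly_pow_three, phi_eq_coeff_windowPoly_pow_three,
      coeff_windowPoly_succ_pow_three_sub hn, coeff_windowPoly_sq_sub_two_sub hn,
      coeff_windowPoly_sq_add_one_add]
    have : (N : ℚ) + 1 - n ≠ 0 := by linarith
    simp only [oddRecip]
    push_cast
    field_simp
    ring
  refine ⟨key, key ▸ add_pos_of_nonneg_of_pos (mul_nonneg (mul_nonneg ?_ ?_) hS) (mul_pos ?_ ?_)⟩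
  · positivity
  · exact sub_nonneg.2 (one_div_le_one_div_of_le (by linarith) (by linarith))
  · positivity
  · rw [sub_pos, div_lt_div_iff₀ (by positivity) (by linarith)]
    linarith

theorem phi_increasing (N n : ℕ) (hN : 1 ≤ N) (hn : n ≤ N) :
    phi n (N + 1) - phi n N =
      (3 / (2 * (N : ℚ) + 3)) * (1 / ((N : ℚ) + 1 - n) - 1 / ((n : ℚ) + N + 2)) *
        (∑ n₁ ∈ Finset.Icc ((n : ℤ) + 1) (N : ℤ), 1 / (2 * (n₁ : ℚ) + 1))
      + (3 / ((2 * (N : ℚ) + 3) * (2 * (n : ℚ) + 1))) *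
        (1 / ((N : ℚ) + 1 - n) - 2 / (2 * (N : ℚ) + 3)) ∧
    0 < phi n (N + 1) - phi n N :=
  phi_increasing_general N n hn
end

section
/- Let h ∈ ℝ^{(L-1)×(L-1)} be real symmetric, w ∈ ℝ^{L-1}, t ∈ ℝ, n ≥ 0 an integer, and Σ¹, Σ² ∈ ℂ with Im(Σ¹) ≤ 0 and Im(Σ²) ≤ 0. Then |wᵀ(i(2n+1)π - Σ¹ - t h)⁻¹w - wᵀ(i(2n+1)π - Σ² - t h)⁻¹w| ≤ (‖w‖₂² / ((2n+1)π)²) · |Σ¹ - Σ²|. -/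
/-!
For Hermitian `A` and `Im z ≠ 0`, `Im ⟪x, (z - A) x⟫ = Im z · ‖x‖²`, so Cauchy–Schwarz gives
`‖(z - A)⁻¹‖ ≤ 1 / |Im z|`. The resolvent identity
`(z₁ - A)⁻¹ - (z₂ - A)⁻¹ = (z₂ - z₁) (z₁ - A)⁻¹ (z₂ - A)⁻¹` then bounds the difference of the
quadratic forms by `‖x‖² |z₁ - z₂| / (|Im z₁| |Im z₂|)`. With `z = i(2n+1)π - Σ` and `Im Σ ≤ 0`
we have `|Im z| ≥ (2n+1)π`.
-/

open Matrix

namespace Matrix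

variable {ι : Type*} [Fintype ι]

theorem inv_smul_one_sub_sub_inv_smul_one_sub [DecidableEq ι] {α : Type*} [CommRing α]
    (A : Matrix ι ι α) {z₁ z₂ : α} (h : IsUnit (z₁ • 1 - A) ↔ IsUnit (z₂ • 1 - A)) :
    (z₁ • 1 - A)⁻¹ - (z₂ • 1 - A)⁻¹ = (z₂ - z₁) • ((z₁ • 1 - A)⁻¹ * (z₂ • 1 - A)⁻¹) := by
  rw [inv_sub_inv h, sub_sub_sub_cancel_right, ← sub_smul, Matrix.mul_smul, Matrix.mul_one,
    Matrix.smul_mul]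

variable {A : Matrix ι ι ℂ}

theorem IsHermitian.im_inner_toLp_mulVec (hA : A.IsHermitian) (x : ι → ℂ) :
    (inner ℂ (WithLp.toLp 2 x) (WithLp.toLp 2 (A *ᵥ x))).im = 0 := by
  rw [EuclideanSpace.inner_toLp_toLp, dotProduct_comm]
  exact hA.im_star_dotProduct_mulVec_self x

variable [DecidableEq ι]

theorem IsHermitian.abs_im_mul_norm_le (hA : A.IsHermitian) (z : ℂ) (x : ι → ℂ) :
    |z.im| * ‖WithLp.toLp 2 x‖ ≤ ‖WithLp.toLp 2 ((z • 1 - A) *ᵥ x)‖ := by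
  set v := WithLp.toLp 2 x
  set u := WithLp.toLp 2 ((z • 1 - A) *ᵥ x) with hu
  have him : (inner ℂ v u).im = z.im * ‖v‖ ^ 2 := by
    rw [hu, sub_mulVec, smul_mulVec, one_mulVec, WithLp.toLp_sub, WithLp.toLp_smul, inner_sub_right,
      inner_smul_right, inner_self_eq_norm_sq_to_K, Complex.sub_im, hA.im_inner_toLp_mulVec]
    simp [← Complex.ofReal_pow]
  have hCS : |z.im| * ‖v‖ ^ 2 ≤ ‖v‖ * ‖u‖ :=
    calc |z.im| * ‖v‖ ^ 2 = |(inner ℂ v u).im| := by rw [him, abs_mul, abs_sq]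
      _ ≤ ‖inner ℂ v u‖ := Complex.abs_im_le_norm _
      _ ≤ ‖v‖ * ‖u‖ := norm_inner_le_norm _ _
  rcases (norm_nonneg v).eq_or_lt with hv | hv
  · rw [← hv, mul_zero]
    positivity
  · nlinarith

theorem IsHermitian.isUnit_smul_one_sub (hA : A.IsHermitian) {z : ℂ} (hz : z.im ≠ 0) :
    IsUnit (z • 1 - A) := by
  refine mulVec_injective_iff_isUnit.mp fun x y hxy => ?_
  have hker : (z • 1 - A) *ᵥ (x - y) = 0 := by rw [mulVec_sub, hxy, sub_self]
  have := hA.abs_im_mul_norm_le z (x - y)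
  rw [hker, WithLp.toLp_zero, norm_zero] at this
  have hzero : ‖WithLp.toLp 2 (x - y)‖ = 0 :=
    le_antisymm (nonpos_of_mul_nonpos_right this (abs_pos.mpr hz)) (norm_nonneg _)
  simpa [sub_eq_zero] using hzero

theorem IsHermitian.norm_inv_smul_one_sub_mulVec_le (hA : A.IsHermitian) {z : ℂ} (hz : z.im ≠ 0)
    (y : ι → ℂ) :
    ‖WithLp.toLp 2 ((z • 1 - A)⁻¹ *ᵥ y)‖ ≤ ‖WithLp.toLp 2 y‖ / |z.im| := by
  rw [le_div_iff₀' (abs_pos.mpr hz)]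
  have := hA.abs_im_mul_norm_le z ((z • 1 - A)⁻¹ *ᵥ y)
  rwa [mulVec_mulVec, mul_nonsing_inv _ ((isUnit_iff_isUnit_det _).mp (hA.isUnit_smul_one_sub hz)),
    one_mulVec] at this

theorem IsHermitian.norm_star_dotProduct_inv_sub_le (hA : A.IsHermitian) {z₁ z₂ : ℂ}
    (hz₁ : z₁.im ≠ 0) (hz₂ : z₂.im ≠ 0) (x : ι → ℂ) :
    ‖star x ⬝ᵥ (z₁ • 1 - A)⁻¹ *ᵥ x - star x ⬝ᵥ (z₂ • 1 - A)⁻¹ *ᵥ x‖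
      ≤ ‖WithLp.toLp 2 x‖ ^ 2 / (|z₁.im| * |z₂.im|) * ‖z₁ - z₂‖ := by
  set y := (z₁ • 1 - A)⁻¹ *ᵥ ((z₂ • 1 - A)⁻¹ *ᵥ x)
  have hdiff : star x ⬝ᵥ (z₁ • 1 - A)⁻¹ *ᵥ x - star x ⬝ᵥ (z₂ • 1 - A)⁻¹ *ᵥ x
      = (z₂ - z₁) * inner ℂ (WithLp.toLp 2 x) (WithLp.toLp 2 y) := by
    rw [← dotProduct_sub, ← sub_mulVec, inv_smul_one_sub_sub_inv_smul_one_sub A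
      (iff_of_true (hA.isUnit_smul_one_sub hz₁) (hA.isUnit_smul_one_sub hz₂)), smul_mulVec,
      dotProduct_smul, smul_eq_mul, ← mulVec_mulVec, EuclideanSpace.inner_toLp_toLp,
      dotProduct_comm]
  have hy : ‖WithLp.toLp 2 y‖ ≤ ‖WithLp.toLp 2 x‖ / |z₂.im| / |z₁.im| :=
    (hA.norm_inv_smul_one_sub_mulVec_le hz₁ _).trans
      (by gcongr; exact hA.norm_inv_smul_one_sub_mulVec_le hz₂ x)
  rw [hdiff, norm_mul, norm_sub_rev, mul_comm]
  gcongr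
  calc ‖inner ℂ (WithLp.toLp 2 x) (WithLp.toLp 2 y)‖
      ≤ ‖WithLp.toLp 2 x‖ * ‖WithLp.toLp 2 y‖ := norm_inner_le_norm _ _
    _ ≤ ‖WithLp.toLp 2 x‖ * (‖WithLp.toLp 2 x‖ / |z₂.im| / |z₁.im|) := by gcongr
    _ = ‖WithLp.toLp 2 x‖ ^ 2 / (|z₁.im| * |z₂.im|) := by ring

end Matrix

theorem bath_update_lipschitz (L : ℕ) (h : Matrix (Fin (L - 1)) (Fin (L - 1)) ℝ)
    (hsym : h.IsSymm) (w : Fin (L - 1) → ℝ) (t : ℝ) (n : ℕ)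
    (S₁ S₂ : ℂ) (hS₁ : S₁.im ≤ 0) (hS₂ : S₂.im ≤ 0) :
    ‖((fun i => (w i : ℂ)) ⬝ᵥ
            ((Complex.I * ((2 * n + 1) * Real.pi) - S₁) •
                (1 : Matrix (Fin (L - 1)) (Fin (L - 1)) ℂ)
              - (t : ℂ) • h.map Complex.ofReal)⁻¹ *ᵥ (fun i => (w i : ℂ))
          - (fun i => (w i : ℂ)) ⬝ᵥ
            ((Complex.I * ((2 * n + 1) * Real.pi) - S₂) •
                (1 : Matrix (Fin (L - 1)) (Fin (L - 1)) ℂ)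
              - (t : ℂ) • h.map Complex.ofReal)⁻¹ *ᵥ (fun i => (w i : ℂ)))‖
      ≤ (∑ i, (w i) ^ 2) / ((2 * n + 1) * Real.pi) ^ 2 * ‖S₁ - S₂‖ := by
  set x : Fin (L - 1) → ℂ := fun i => (w i : ℂ)
  have hp : 0 < (2 * n + 1) * Real.pi := by positivity
  have hA : ((t : ℂ) • h.map Complex.ofReal).IsHermitian :=
    ((isHermitian_iff_isSymm.mpr hsym).map _ fun a => (Complex.conj_ofReal a).symm).smul
      (Complex.conj_ofReal t)
  have habs_im (S : ℂ) (hS : S.im ≤ 0) :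
      (2 * n + 1) * Real.pi ≤ |(Complex.I * ((2 * n + 1) * Real.pi) - S).im| := by
    have : (Complex.I * ((2 * n + 1) * Real.pi) - S).im = (2 * n + 1) * Real.pi - S.im := by
      simp
    rw [this, abs_of_pos (by linarith)]
    linarith
  have hx : star x = x := funext fun i => Complex.conj_ofReal (w i)
  have hnorm : ‖WithLp.toLp 2 x‖ ^ 2 = ∑ i, w i ^ 2 := by
    simp [x, EuclideanSpace.norm_sq_eq]
  have him_ne (S : ℂ) (hS : S.im ≤ 0) : (Complex.I * ((2 * n + 1) * Real.pi) - S).im ≠ 0 :=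
    abs_pos.mp (hp.trans_le (habs_im S hS))
  have hbound := hA.norm_star_dotProduct_inv_sub_le (him_ne S₁ hS₁) (him_ne S₂ hS₂) x
  rw [hx, hnorm, sub_sub_sub_cancel_left, norm_sub_rev S₂] at hbound
  refine hbound.trans ?_
  gcongr
  rw [sq]
  exact mul_le_mul (habs_im S₁ hS₁) (habs_im S₂ hS₂) hp.le (abs_nonneg _)
end

section
/- For 0 < λ < 27/4, the unique real root z₀ of (z₀-1)³ = λ z₀ satisfies z₀ > 1. For λ > 27/4, the cubic (z₀-1)³ = λ z₀ has three distinct real roots, exactly one of which is greater than 1 and the other two are strictly negative. -/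
/-!
Away from `z = 0` the equation reads `φ z = λ` with `φ z = (z - 1)³ / z`. There are no roots in
`[0, 1]`, where the two sides have opposite signs. The function `φ` increases on `(1, ∞)`, and on
`(-∞, 0)` it decreases down to its minimum `φ (-1/2) = 27/4` and then increases again. Rather than
differentiating `φ`, monotonicity on each branch is obtained from the factorization
`(a - 1)³ b - (b - 1)³ a = (a - b) (a b (a + b) - 3 a b + 1)`, whose second factor has a fixed sign
on each branch; existence of roots comes from the intermediate value theorem.
-/

open Set

namespace DimerCubic

variable {lam a b z : ℝ}

theorem eq_of_roots (ha : (a - 1) ^ 3 = lam * a) (hb : (b - 1) ^ 3 = lam * b)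
    (hne : a * b * (a + b) - 3 * (a * b) + 1 ≠ 0) : a = b := by
  have key : (a - b) * (a * b * (a + b) - 3 * (a * b) + 1) = 0 := by
    linear_combination b * ha - a * hb
  exact sub_eq_zero.1 ((mul_eq_zero.1 key).resolve_right hne)

theorem root_eq_of_one_lt (ha : (a - 1) ^ 3 = lam * a) (hb : (b - 1) ^ 3 = lam * b)
    (ha1 : 1 < a) (hb1 : 1 < b) : a = b := by
  refine eq_of_roots ha hb (ne_of_gt ?_)
  have hx : 0 < a - 1 := by linarith
  have hy : 0 < b - 1 := by linarith
  nlinarith [mul_pos hx hy, mul_pos (mul_pos hx hy) (add_pos hx hy)]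

theorem root_eq_of_mem_Ioo (ha : (a - 1) ^ 3 = lam * a) (hb : (b - 1) ^ 3 = lam * b)
    (ha' : a ∈ Ioo (-1 / 2 : ℝ) 0) (hb' : b ∈ Ioo (-1 / 2 : ℝ) 0) : a = b := by
  obtain ⟨ha1, ha2⟩ := ha'
  obtain ⟨hb1, hb2⟩ := hb'
  refine eq_of_roots ha hb (ne_of_gt ?_)
  nlinarith [mul_pos_of_neg_of_neg ha2 hb2,
    mul_pos (by linarith : 0 < a + 1 / 2) (by linarith : 0 < b + 1 / 2)]

theorem root_eq_of_lt_neg_half (ha : (a - 1) ^ 3 = lam * a) (hb : (b - 1) ^ 3 = lam * b)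
    (ha' : a < -1 / 2) (hb' : b < -1 / 2) : a = b := by
  refine eq_of_roots ha hb (ne_of_lt ?_)
  nlinarith [mul_pos (by linarith : 0 < -1 / 2 - a) (by linarith : 0 < -1 / 2 - b)]

theorem lt_zero_or_one_lt_of_root (hlam : 0 < lam) (hz : (z - 1) ^ 3 = lam * z) :
    z < 0 ∨ 1 < z := by
  by_contra! h
  obtain ⟨h0, h1⟩ := h
  rcases h0.eq_or_lt with rfl | h0
  · norm_num at hz
  · nlinarith [mul_pos hlam h0, mul_nonneg (sq_nonneg (z - 1)) (sub_nonneg.2 h1)]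

/-- On the negative axis `(z - 1)³ - 27/4 z = (z + 1/2)² (z - 4) ≤ 0`. -/
theorem le_of_root_of_neg (hz : (z - 1) ^ 3 = lam * z) (hz0 : z < 0) : 27 / 4 ≤ lam := by
  have hcmp : lam * z ≤ 27 / 4 * z := by
    nlinarith [mul_nonneg (sq_nonneg (z + 1 / 2)) (by linarith : (0 : ℝ) ≤ 4 - z)]
  by_contra! h
  nlinarith

theorem exists_root_mem_Ioo (hab : a ≤ b)
    (hsign : (a - 1) ^ 3 - lam * a < 0 ∧ 0 < (b - 1) ^ 3 - lam * b ∨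
      0 < (a - 1) ^ 3 - lam * a ∧ (b - 1) ^ 3 - lam * b < 0) :
    ∃ z ∈ Ioo a b, (z - 1) ^ 3 = lam * z := by
  have hcont : ContinuousOn (fun z : ℝ => (z - 1) ^ 3 - lam * z) (Icc a b) := by fun_prop
  have hzero : (0 : ℝ) ∈ (fun z : ℝ => (z - 1) ^ 3 - lam * z) '' Ioo a b := by
    rcases hsign with h | h
    · exact intermediate_value_Ioo hab hcont h
    · exact intermediate_value_Ioo' hab hcont ⟨h.2, h.1⟩
  obtain ⟨z, hz, hz0⟩ := hzero
  exact ⟨z, hz, sub_eq_zero.1 hz0⟩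

theorem exists_root_one_lt (hlam : 0 < lam) : ∃ z, 1 < z ∧ (z - 1) ^ 3 = lam * z := by
  obtain ⟨z, hz, hroot⟩ := exists_root_mem_Ioo (a := 1) (b := lam + 2) (lam := lam)
    (by linarith) (Or.inl ⟨by nlinarith, by nlinarith [pow_pos hlam 3, pow_pos hlam 2]⟩)
  exact ⟨z, hz.1, hroot⟩

theorem exists_roots_neg (hlam : 27 / 4 < lam) :
    ∃ z₂ z₃, z₂ ∈ Ioo (-1 / 2 : ℝ) 0 ∧ z₃ < -1 / 2 ∧
      (z₂ - 1) ^ 3 = lam * z₂ ∧ (z₃ - 1) ^ 3 = lam * z₃ := by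
  obtain ⟨z₂, hz₂, hroot₂⟩ := exists_root_mem_Ioo (a := -1 / 2) (b := 0) (lam := lam)
    (by norm_num) (Or.inr ⟨by linarith, by norm_num⟩)
  obtain ⟨z₃, hz₃, hroot₃⟩ := exists_root_mem_Ioo (a := -lam) (b := -1 / 2) (lam := lam)
    (by linarith) (Or.inl ⟨by nlinarith [pow_pos (by linarith : 0 < lam) 3], by linarith⟩)
  exact ⟨z₂, z₃, hz₂, hz₃.2, hroot₂, hroot₃⟩

end DimerCubic

open DimerCubic in
theorem cubic_roots_location (lam : ℝ) (hlam : 0 < lam) :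
    (lam < 27 / 4 →
      (∃! z : ℝ, (z - 1) ^ 3 = lam * z) ∧ ∀ z : ℝ, (z - 1) ^ 3 = lam * z → 1 < z) ∧
    (27 / 4 < lam →
      ∃ z₁ z₂ z₃ : ℝ, z₁ ≠ z₂ ∧ z₁ ≠ z₃ ∧ z₂ ≠ z₃ ∧
        (z₁ - 1) ^ 3 = lam * z₁ ∧ (z₂ - 1) ^ 3 = lam * z₂ ∧ (z₃ - 1) ^ 3 = lam * z₃ ∧
        1 < z₁ ∧ z₂ < 0 ∧ z₃ < 0 ∧
        ∀ z : ℝ, (z - 1) ^ 3 = lam * z → (z = z₁ ∨ z = z₂ ∨ z = z₃)) := by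
  obtain ⟨z₁, hz₁, hroot₁⟩ := exists_root_one_lt hlam
  refine ⟨fun hsmall => ?_, fun hlarge => ?_⟩
  · have hgt : ∀ z, (z - 1) ^ 3 = lam * z → 1 < z := fun z hz =>
      (lt_zero_or_one_lt_of_root hlam hz).resolve_left
        fun hz0 => (le_of_root_of_neg hz hz0).not_gt hsmall
    exact ⟨⟨z₁, hroot₁, fun z hz => root_eq_of_one_lt hz hroot₁ (hgt z hz) hz₁⟩, hgt⟩
  obtain ⟨z₂, z₃, hz₂, hz₃, hroot₂, hroot₃⟩ := exists_roots_neg hlarge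
  refine ⟨z₁, z₂, z₃, by linarith [hz₂.2], by linarith, by linarith [hz₂.1], hroot₁, hroot₂,
    hroot₃, hz₁, hz₂.2, by linarith, fun z hz => ?_⟩
  rcases lt_zero_or_one_lt_of_root hlam hz with hz0 | hz1
  · rcases lt_trichotomy z (-1 / 2) with h | rfl | h
    · exact Or.inr (Or.inr (root_eq_of_lt_neg_half hz hroot₃ h hz₃))
    · norm_num at hz; linarith
    · exact Or.inr (Or.inl (root_eq_of_mem_Ioo hz hroot₂ ⟨h, hz0⟩ hz₂))
  · exact Or.inl (root_eq_of_one_lt hz hroot₁ hz1 hz₁)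
end

section
/- Let ε > 0, λ > 0 and suppose z ∈ ℂ satisfies z(λ - ε²π²(z-1)|z-1|²) = (z-1)|z-1|². Then z is real, and z is a root of the real quartic polynomial (1 + ε²π² z)(z-1)³ = λ z. -/
/-!
Writing `r = |z - 1|`, the equation says that `z` is a root of the quadratic
`ε²π² r² · z² + ((1 - ε²π²) r² - λ) · z - r²` with real coefficients. Its leading and constant
coefficients have opposite signs, so it cannot have a pair of conjugate non-real roots (their
product `|z|²` would be negative): `z` is real. Then `|z - 1|² = (z - 1)²`, and substituting this
back turns the equation into the quartic.
-/

namespace Complex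

theorem im_eq_zero_of_quadratic_eq_zero {a b c : ℝ} (hac : a * c < 0) {z : ℂ}
    (hz : (a : ℂ) * z ^ 2 + b * z + c = 0) : z.im = 0 := by
  have hre := congrArg re hz
  have him := congrArg im hz
  simp only [add_re, add_im, mul_re, mul_im, ofReal_re, ofReal_im, sq, zero_re, zero_im] at hre him
  by_contra hy
  have hb : 2 * a * z.re + b = 0 :=
    (mul_eq_zero.mp (by linear_combination him : z.im * (2 * a * z.re + b) = 0)).resolve_left hy
  have hc : c = a * (z.re ^ 2 + z.im ^ 2) := by linear_combination hre - z.re * hb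
  rw [hc, ← mul_assoc, ← sq] at hac
  exact hac.not_ge (by positivity)

theorem ofReal_norm_sq_of_im_eq_zero {w : ℂ} (hw : w.im = 0) : ((‖w‖ : ℝ) : ℂ) ^ 2 = w ^ 2 := by
  rw [← mul_conj', conj_eq_iff_im.mpr hw, sq]

end Complex

theorem finite_temperature_equation_real (eps lam : ℝ) (heps : 0 < eps) (hlam : 0 < lam)
    (z : ℂ)
    (hz : z * ((lam : ℂ) - (eps : ℂ) ^ 2 * (Real.pi : ℂ) ^ 2 * (z - 1) *
        ((‖z - 1‖ : ℝ) : ℂ) ^ 2) =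
      (z - 1) * ((‖z - 1‖ : ℝ) : ℂ) ^ 2) :
    z.im = 0 ∧
      (1 + (eps : ℂ) ^ 2 * (Real.pi : ℂ) ^ 2 * z) * (z - 1) ^ 3 = (lam : ℂ) * z := by
  set r : ℝ := ‖z - 1‖ with hr
  have hz1 : z ≠ 1 := by
    rintro rfl
    simp only [sub_self, mul_zero, zero_mul, sub_zero, one_mul] at hz
    exact hlam.ne' (by exact_mod_cast hz)
  have hr0 : r ≠ 0 := by simpa [hr, sub_eq_zero] using hz1
  have hquad : ((eps ^ 2 * Real.pi ^ 2 * r ^ 2 : ℝ) : ℂ) * z ^ 2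
      + (((1 - eps ^ 2 * Real.pi ^ 2) * r ^ 2 - lam : ℝ) : ℂ) * z + ((-r ^ 2 : ℝ) : ℂ) = 0 := by
    push_cast
    linear_combination -hz
  have hcoeff : eps ^ 2 * Real.pi ^ 2 * r ^ 2 * -r ^ 2 < 0 := by
    have : 0 < eps ^ 2 * Real.pi ^ 2 * r ^ 2 * r ^ 2 := by positivity
    linarith
  have him : z.im = 0 := Complex.im_eq_zero_of_quadratic_eq_zero hcoeff hquad
  have hsq : ((r : ℝ) : ℂ) ^ 2 = (z - 1) ^ 2 :=
    Complex.ofReal_norm_sq_of_im_eq_zero (by simp [him])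
  exact ⟨him, by linear_combination -hz - (1 + (eps : ℂ) ^ 2 * (Real.pi : ℂ) ^ 2 * z) * (z - 1) * hsq⟩
end

section
/- The system of two quartic polynomial equations in (x₀,x₁): (x₀-1)(1 - b P₀(x₀,x₁)) + a x₀ = 0 and (x₁-1)(9 - b P₁(x₀,x₁)) + a x₁ = 0, where P₀(x₀,x₁) = -3x₀³ + x₀²x₁ - (2/3)x₀x₁² and P₁(x₀,x₁) = 3x₀³ - 6x₀²x₁ - (1/3)x₁³, admits a solution of the form (x₀, 0) with x₀ ∈ (0,1] and a ≥ 0, if and only if b = 3(1 + a/10)³. -/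
/-!
With `x₁ = 0` the second equation says `b x₀³ = 3`. Substituted into the first, this turns it
into the linear equation `10 (x₀ - 1) + a x₀ = 0`, so `x₀ = 10 / (10 + a)`, which lies in `(0, 1]`
exactly because `a ≥ 0`; then `b = 3 / x₀³ = 3 (1 + a / 10)³`.
-/

lemma second_boundary_eq_iff (a b x₀ : ℝ) :
    ((0 : ℝ) - 1) * (9 - b * (3 * x₀ ^ 3 - 6 * x₀ ^ 2 * 0 - (1 / 3) * 0 ^ 3)) + a * 0 = 0 ↔
      b * x₀ ^ 3 = 3 := by
  constructor <;> intro h <;> linarith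

lemma first_boundary_eq_iff {a b x₀ : ℝ} (ha : 10 + a ≠ 0) (hb : b * x₀ ^ 3 = 3) :
    (x₀ - 1) * (1 - b * (-3 * x₀ ^ 3 + x₀ ^ 2 * 0 - (2 / 3) * x₀ * 0 ^ 2)) + a * x₀ = 0 ↔
      x₀ = 10 / (10 + a) := by
  have hlin : (x₀ - 1) * (1 - b * (-3 * x₀ ^ 3 + x₀ ^ 2 * 0 - (2 / 3) * x₀ * 0 ^ 2)) + a * x₀ =
      x₀ * (10 + a) - 10 := by
    linear_combination (3 * x₀ - 3) * hb
  rw [hlin, sub_eq_zero, eq_div_iff ha]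

lemma mul_div_pow_three_eq_three_iff {a b : ℝ} (ha : 10 + a ≠ 0) :
    b * (10 / (10 + a)) ^ 3 = 3 ↔ b = 3 * (1 + a / 10) ^ 3 := by
  have hpow : (1 + a / 10) ^ 3 * (10 / (10 + a)) ^ 3 = 1 := by
    rw [← mul_pow]
    field_simp
  constructor
  · intro h
    linear_combination (1 + a / 10) ^ 3 * h - b * hpow
  · intro h
    rw [h]
    linear_combination 3 * hpow

theorem dimer_boundary_solution (a b : ℝ) (ha : 0 ≤ a) :
    (∃ x₀ : ℝ, 0 < x₀ ∧ x₀ ≤ 1 ∧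
        (x₀ - 1) * (1 - b * (-3 * x₀ ^ 3 + x₀ ^ 2 * 0 - (2 / 3) * x₀ * 0 ^ 2)) + a * x₀ = 0 ∧
        ((0 : ℝ) - 1) * (9 - b * (3 * x₀ ^ 3 - 6 * x₀ ^ 2 * 0 - (1 / 3) * 0 ^ 3)) + a * 0 = 0) ↔
      b = 3 * (1 + a / 10) ^ 3 := by
  have h10 : (10 : ℝ) + a ≠ 0 := by positivity
  constructor
  · rintro ⟨x₀, -, -, h₁, h₂⟩
    rw [second_boundary_eq_iff] at h₂
    obtain rfl := (first_boundary_eq_iff h10 h₂).1 h₁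
    exact (mul_div_pow_three_eq_three_iff h10).1 h₂
  · intro hb
    have hcube := (mul_div_pow_three_eq_three_iff h10).2 hb
    refine ⟨10 / (10 + a), by positivity, div_le_one_of_le₀ (by linarith) (by positivity),
      (first_boundary_eq_iff h10 hcube).2 rfl, (second_boundary_eq_iff a b _).2 hcube⟩
end
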